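/- Let q be a nonzero complex number and n ≥ 1 a natural number. The Hecke algebra H_n(q), defined as the quotient of the free associative ℂ-algebra on generators g_1, ..., g_{n-1} by the two-sided ideal generated by the relations g_i g_j = g_j g_i for |i-j| > 1, g_i g_j g_i = g_j g_i g_j for |i-j| = 1, and (g_i - 1)(g_i + q) = 0 for all i, is a finite-dimensional ℂ-algebra of dimension n! (i.e., its dimension as a ℂ-vector space equals the factorial of n). -/

import Mathlib

/-- The defining relations of the Hecke algebra `H_n(q)` on the generators
`g_0, …, g_{n-2}` (indexed by `Fin (n-1)`):
commutation for distant generators, the braid relation for adjacent generators,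
and the quadratic relation `(g_i - 1)(g_i + q) = 0`. -/
inductive HeckeRel (q : ℂ) (n : ℕ) :
    FreeAlgebra ℂ (Fin (n - 1)) → FreeAlgebra ℂ (Fin (n - 1)) → Prop
  | comm (i j : Fin (n - 1)) (h : (i : ℕ) + 1 < (j : ℕ) ∨ (j : ℕ) + 1 < (i : ℕ)) :
      HeckeRel q n (FreeAlgebra.ι ℂ i * FreeAlgebra.ι ℂ j)
        (FreeAlgebra.ι ℂ j * FreeAlgebra.ι ℂ i)
  | braid (i j : Fin (n - 1)) (h : (i : ℕ) + 1 = (j : ℕ) ∨ (j : ℕ) + 1 = (i : ℕ)) :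
      HeckeRel q n (FreeAlgebra.ι ℂ i * FreeAlgebra.ι ℂ j * FreeAlgebra.ι ℂ i)
        (FreeAlgebra.ι ℂ j * FreeAlgebra.ι ℂ i * FreeAlgebra.ι ℂ j)
  | quad (i : Fin (n - 1)) :
      HeckeRel q n ((FreeAlgebra.ι ℂ i - 1) *
        (FreeAlgebra.ι ℂ i + algebraMap ℂ (FreeAlgebra ℂ (Fin (n - 1))) q)) 0

/-- The Hecke algebra `H_n(q)`, as the quotient of the free associative `ℂ`-algebra
on generators `g_1, …, g_{n-1}` by the Hecke relations. -/
abbrev HeckeAlgebra (q : ℂ) (n : ℕ) : Type := RingQuot (HeckeRel q n)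

namespace HeckeProof

variable (q : ℂ) (N : ℕ)

/-- generator of the Hecke algebra `H_{N+1}(q)` -/
noncomputable def t (i : Fin N) : HeckeAlgebra q (N + 1) :=
  RingQuot.mkAlgHom ℂ (HeckeRel q (N + 1)) (FreeAlgebra.ι ℂ i)

variable {q N}

lemma t_comm {i j : Fin N} (h : (i : ℕ) + 1 < (j : ℕ) ∨ (j : ℕ) + 1 < (i : ℕ)) :
    t q N i * t q N j = t q N j * t q N i := by
  have := RingQuot.mkAlgHom_rel ℂ (HeckeRel.comm (q := q) (n := N+1) i j h)
  simpa [t, map_mul] using this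

lemma t_braid {i j : Fin N} (h : (i : ℕ) + 1 = (j : ℕ) ∨ (j : ℕ) + 1 = (i : ℕ)) :
    t q N i * t q N j * t q N i = t q N j * t q N i * t q N j := by
  have := RingQuot.mkAlgHom_rel ℂ (HeckeRel.braid (q := q) (n := N+1) i j h)
  simpa [t, map_mul] using this

lemma t_sq (i : Fin N) :
    t q N i * t q N i = (1 - q) • t q N i + q • 1 := by
  have := RingQuot.mkAlgHom_rel ℂ (HeckeRel.quad (q := q) (n := N+1) i)
  rw [map_mul, map_sub, map_add, map_one, map_zero, AlgHom.commutes] at this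
  set c : HeckeAlgebra q (N+1) := algebraMap ℂ _ q with hc
  have hcc : c * t q N i = t q N i * c := Algebra.commutes q _
  have h3 : t q N i * t q N i - ((1 - q) • t q N i + q • (1 : HeckeAlgebra q (N+1)))
      = (t q N i - 1) * (t q N i + c) + (c * t q N i - t q N i * c) := by
    simp only [Algebra.smul_def, mul_one, map_sub, map_one, ← hc, sub_mul, mul_add, one_mul]
    abel
  have h2 : (t q N i - 1) * (t q N i + c) = 0 := this
  rw [← sub_eq_zero, h3, h2, hcc, sub_self, add_zero]


/-! ### The module `ℂ[S_{N+1}]` -/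

variable (N) in
abbrev W := Equiv.Perm (Fin (N + 1))

variable (N) in
abbrev M := W N →₀ ℂ

variable (N) in
def σ (i : Fin N) : W N := Equiv.swap i.castSucc i.succ

lemma σ_mul_self (i : Fin N) : σ N i * σ N i = 1 := by
  simp [σ, Equiv.swap_mul_self]

variable (N) in
def U (i : Fin N) (w : W N) : Prop := w⁻¹ i.castSucc < w⁻¹ i.succ

instance (i : Fin N) (w : W N) : Decidable (U N i w) := by unfold U; infer_instance

variable (q N) in
noncomputable def T (i : Fin N) : M N →ₗ[ℂ] M N :=
  Finsupp.lsum ℂ fun w => LinearMap.toSpanSingleton ℂ (M N)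
    (if U N i w then Finsupp.single (σ N i * w) 1
      else q • Finsupp.single (σ N i * w) 1 + (1 - q) • Finsupp.single w 1)

lemma Tsu {i : Fin N} {w : W N} (h : U N i w) :
    T q N i (Finsupp.single w 1) = Finsupp.single (σ N i * w) 1 := by
  simp [T, Finsupp.lsum_single, LinearMap.toSpanSingleton_apply, if_pos h]

lemma Tsd {i : Fin N} {w : W N} (h : ¬ U N i w) :
    T q N i (Finsupp.single w 1) =
      q • Finsupp.single (σ N i * w) 1 + (1 - q) • Finsupp.single w 1 := by
  simp [T, Finsupp.lsum_single, LinearMap.toSpanSingleton_apply, if_neg h]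

lemma U_mul (i : Fin N) (u w : W N) :
    U N i (u * w) ↔ w⁻¹ (u⁻¹ i.castSucc) < w⁻¹ (u⁻¹ i.succ) := by
  simp [U, mul_inv_rev, Equiv.Perm.mul_apply]

lemma U_sigma_self (i : Fin N) (w : W N) : U N i (σ N i * w) ↔ ¬ U N i w := by
  rw [U_mul]
  have h1 : (σ N i)⁻¹ i.castSucc = i.succ := by simp [σ]
  have h2 : (σ N i)⁻¹ i.succ = i.castSucc := by simp [σ]
  rw [h1, h2, U]
  constructor
  · intro h h'; exact absurd (lt_trans h h') (lt_irrefl _)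
  · intro h
    rcases lt_trichotomy (w⁻¹ i.succ) (w⁻¹ i.castSucc) with h' | h' | h'
    · exact h'
    · exact absurd (w⁻¹.injective h'.symm)
        (Fin.ne_of_lt ((Fin.castSucc_lt_succ (i := i))))
    · exact absurd h' h


lemma lhom_single_one {φ ψ : M N →ₗ[ℂ] M N}
    (h : ∀ w, φ (Finsupp.single w 1) = ψ (Finsupp.single w 1)) : φ = ψ := by
  apply Finsupp.lhom_ext; intro a b
  have hb : (Finsupp.single a b : M N) = b • Finsupp.single a 1 := by
    rw [Finsupp.smul_single, smul_eq_mul, mul_one]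
  rw [hb, map_smul, map_smul, h]

lemma sigma_cancel (i : Fin N) (w : W N) : σ N i * (σ N i * w) = w := by
  rw [← mul_assoc, σ_mul_self, one_mul]

lemma T_quad (i : Fin N) :
    (T q N i * T q N i : Module.End ℂ (M N)) = (1 - q) • T q N i + q • 1 := by
  apply lhom_single_one; intro w
  by_cases h : U N i w
  · have h' : ¬ U N i (σ N i * w) := by rw [U_sigma_self]; exact not_not_intro h
    simp only [Module.End.mul_apply, Tsu h, Tsd h', sigma_cancel,
      LinearMap.add_apply, LinearMap.smul_apply, Module.End.one_apply, Tsu h]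
    module
  · have h' : U N i (σ N i * w) := by rw [U_sigma_self]; exact h
    simp only [Module.End.mul_apply, Tsd h, map_add, map_smul, Tsu h', sigma_cancel,
      LinearMap.add_apply, LinearMap.smul_apply, Module.End.one_apply, Tsd h]
    module


lemma T_quad' (i : Fin N) :
    (T q N i - 1) * (T q N i + q • 1) = (0 : Module.End ℂ (M N)) := by
  apply LinearMap.ext; intro x
  have h := LinearMap.congr_fun (T_quad (q := q) (N := N) i) x
  simp only [Module.End.mul_apply, LinearMap.sub_apply, LinearMap.add_apply,
    LinearMap.smul_apply, Module.End.one_apply, LinearMap.zero_apply] at h ⊢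
  rw [map_add, map_smul, h]
  module

section Far
variable {i j : Fin N} (hij : (i : ℕ) + 1 < (j : ℕ) ∨ (j : ℕ) + 1 < (i : ℕ))

include hij

lemma far_fix1 : σ N j i.castSucc = i.castSucc := by
  apply Equiv.swap_apply_of_ne_of_ne <;>
    (apply Fin.ne_of_val_ne; simp [Fin.val_succ]; omega)

lemma far_fix2 : σ N j i.succ = i.succ := by
  apply Equiv.swap_apply_of_ne_of_ne <;>
    (apply Fin.ne_of_val_ne; simp [Fin.val_succ]; omega)

lemma sigma_comm : σ N i * σ N j = σ N j * σ N i := by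
  have hd : (σ N i).Disjoint (σ N j) := by
    intro x
    by_cases h1 : x = i.castSucc
    · right; subst h1; exact far_fix1 hij
    by_cases h2 : x = i.succ
    · right; subst h2; exact far_fix2 hij
    · left; exact Equiv.swap_apply_of_ne_of_ne h1 h2
  exact hd.commute.eq

lemma U_far (w : W N) : U N i (σ N j * w) ↔ U N i w := by
  rw [U_mul]
  have hinv : (σ N j)⁻¹ = σ N j := Equiv.swap_inv _ _
  rw [hinv, far_fix1 hij, far_fix2 hij, U]

lemma sigma_comm_w (w : W N) : σ N i * (σ N j * w) = σ N j * (σ N i * w) := by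
  rw [← mul_assoc, sigma_comm hij, mul_assoc]

lemma T_comm : (T q N i * T q N j : Module.End ℂ (M N)) = T q N j * T q N i := by
  have hij' := hij.symm
  apply lhom_single_one; intro w
  by_cases h1 : U N i w <;> by_cases h2 : U N j w <;>
  · simp only [Module.End.mul_apply, Tsu, Tsd, h1, h2, map_add, map_smul,
      U_far hij, U_far hij', not_false_iff, not_true, if_pos, if_neg]
    rw [sigma_comm_w hij]; try module

end Far


section Braid
variable {i j : Fin N} (hij : (i : ℕ) + 1 = (j : ℕ))
include hij

lemma adj_cast : j.castSucc = i.succ := by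
  apply Fin.ext; simp [Fin.val_succ, hij]

lemma T_braid :
    (T q N i * T q N j * T q N i : Module.End ℂ (M N)) = T q N j * T q N i * T q N j := by
  have h01 : i.castSucc ≠ i.succ := Fin.ne_of_lt ((Fin.castSucc_lt_succ (i := i)))
  have h02 : i.castSucc ≠ j.succ := by
    apply Fin.ne_of_val_ne; simp [Fin.val_succ]; omega
  have h12 : i.succ ≠ j.succ := by
    apply Fin.ne_of_val_ne; simp [Fin.val_succ]; omega
  have hσi : σ N i = Equiv.swap i.castSucc i.succ := rfl
  have hσj : σ N j = Equiv.swap i.succ j.succ := by rw [σ, adj_cast hij]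
  have invi : (σ N i)⁻¹ = σ N i := Equiv.swap_inv _ _
  have invj : (σ N j)⁻¹ = σ N j := Equiv.swap_inv _ _
  have e1 : σ N i i.castSucc = i.succ := Equiv.swap_apply_left _ _
  have e2 : σ N i i.succ = i.castSucc := Equiv.swap_apply_right _ _
  have e3 : σ N i j.succ = j.succ := Equiv.swap_apply_of_ne_of_ne h02.symm h12.symm
  have e4 : σ N j i.castSucc = i.castSucc := by
    rw [hσj]; exact Equiv.swap_apply_of_ne_of_ne h01 h02
  have e5 : σ N j i.succ = j.succ := by rw [hσj]; exact Equiv.swap_apply_left _ _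
  have e6 : σ N j j.succ = i.succ := by rw [hσj]; exact Equiv.swap_apply_right _ _
  have hbr : σ N i * σ N j * σ N i = σ N j * σ N i * σ N j := by
    have A1 : Equiv.swap i.succ j.succ * Equiv.swap i.castSucc i.succ *
        Equiv.swap i.succ j.succ = Equiv.swap j.succ i.castSucc :=
      Equiv.swap_mul_swap_mul_swap h01 h02
    have A2 : Equiv.swap i.succ i.castSucc * Equiv.swap j.succ i.succ *
        Equiv.swap i.succ i.castSucc = Equiv.swap i.castSucc j.succ :=
      Equiv.swap_mul_swap_mul_swap h12.symm h02.symm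
    rw [hσi, hσj, Equiv.swap_comm i.castSucc i.succ, Equiv.swap_comm i.succ j.succ, A2,
      ← Equiv.swap_comm i.succ j.succ, ← Equiv.swap_comm i.castSucc i.succ, A1,
      Equiv.swap_comm]
  have hbrw : ∀ u : W N, σ N i * (σ N j * (σ N i * u)) = σ N j * (σ N i * (σ N j * u)) := by
    intro u; simp only [← mul_assoc]; rw [hbr]
  apply lhom_single_one; intro w
  set a := w⁻¹ i.castSucc with ha
  set b := w⁻¹ i.succ with hb
  set c := w⁻¹ j.succ with hc
  have hU1 : U N i w ↔ a < b := Iff.rfl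
  have hU2 : U N j w ↔ b < c := by rw [U, adj_cast hij]
  have hU3 : U N j (σ N i * w) ↔ a < c := by
    rw [U_mul, invi, adj_cast hij, e2, e3]
  have hU4 : U N i (σ N j * w) ↔ a < c := by
    rw [U_mul, invj, e4, e5]
  have hU5 : U N i (σ N j * (σ N i * w)) ↔ b < c := by
    rw [← mul_assoc, U_mul, mul_inv_rev, invi, invj, Equiv.Perm.mul_apply,
      Equiv.Perm.mul_apply, e4, e1, e5, e3]
  have hU6 : U N j (σ N i * (σ N j * w)) ↔ a < b := by
    rw [← mul_assoc, U_mul, mul_inv_rev, invi, invj, Equiv.Perm.mul_apply,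
      Equiv.Perm.mul_apply, adj_cast hij, e2, e4, e3, e6]
  have hU7 : U N i (σ N i * w) ↔ ¬ (a < b) := by rw [U_sigma_self, hU1]
  have hU8 : U N j (σ N j * w) ↔ ¬ (b < c) := by rw [U_sigma_self, hU2]
  have hU9 : U N i (σ N i * (σ N j * w)) ↔ ¬ (a < c) := by rw [U_sigma_self, hU4]
  have hU10 : U N j (σ N j * (σ N i * w)) ↔ ¬ (a < c) := by rw [U_sigma_self, hU3]
  have hab : a ≠ b := fun h => h01 (w⁻¹.injective h)
  have hac : a ≠ c := fun h => h02 (w⁻¹.injective h)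
  have hbc : b ≠ c := fun h => h12 (w⁻¹.injective h)
  rcases lt_trichotomy a b with o1 | o1 | o1
  · rcases lt_trichotomy b c with o2 | o2 | o2
    · have F1 := o1
      have F2 := o2
      have F3 := o1.trans o2
      simp only [Module.End.mul_apply, Tsu, Tsd, hU1, hU2, hU3, hU4, hU5, hU6, hU7, hU8,
        hU9, hU10, F1, F2, F3, sigma_cancel, map_add, map_smul, smul_add, smul_smul,
        not_true, not_false_iff, iff_true, iff_false, if_true, if_false, hbrw]
      try module
      try rfl
    · exact absurd o2 hbc
    · rcases lt_trichotomy a c with o3 | o3 | o3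
      · have F1 := o1
        have F2 : ¬ b < c := asymm o2
        have F3 := o3
        simp only [Module.End.mul_apply, Tsu, Tsd, hU1, hU2, hU3, hU4, hU5, hU6, hU7, hU8,
          hU9, hU10, F1, F2, F3, sigma_cancel, map_add, map_smul, smul_add, smul_smul,
          not_true, not_false_iff, iff_true, iff_false, if_true, if_false, hbrw]
        try module
        try rfl
      · exact absurd o3 hac
      · have F1 := o1
        have F2 : ¬ b < c := asymm o2
        have F3 : ¬ a < c := asymm o3
        simp only [Module.End.mul_apply, Tsu, Tsd, hU1, hU2, hU3, hU4, hU5, hU6, hU7, hU8,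
          hU9, hU10, F1, F2, F3, sigma_cancel, map_add, map_smul, smul_add, smul_smul,
          not_true, not_false_iff, iff_true, iff_false, if_true, if_false, hbrw]
        try module
        try rfl
  · exact absurd o1 hab
  · rcases lt_trichotomy b c with o2 | o2 | o2
    · rcases lt_trichotomy a c with o3 | o3 | o3
      · have F1 : ¬ a < b := asymm o1
        have F2 := o2
        have F3 := o3
        simp only [Module.End.mul_apply, Tsu, Tsd, hU1, hU2, hU3, hU4, hU5, hU6, hU7, hU8,
          hU9, hU10, F1, F2, F3, sigma_cancel, map_add, map_smul, smul_add, smul_smul,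
          not_true, not_false_iff, iff_true, iff_false, if_true, if_false, hbrw]
        try module
        try rfl
      · exact absurd o3 hac
      · have F1 : ¬ a < b := asymm o1
        have F2 := o2
        have F3 : ¬ a < c := asymm o3
        simp only [Module.End.mul_apply, Tsu, Tsd, hU1, hU2, hU3, hU4, hU5, hU6, hU7, hU8,
          hU9, hU10, F1, F2, F3, sigma_cancel, map_add, map_smul, smul_add, smul_smul,
          not_true, not_false_iff, iff_true, iff_false, if_true, if_false, hbrw]
        try module
        try rfl
    · exact absurd o2 hbc
    · have F1 : ¬ a < b := asymm o1
      have F2 : ¬ b < c := asymm o2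
      have F3 : ¬ a < c := asymm (o2.trans o1)
      simp only [Module.End.mul_apply, Tsu, Tsd, hU1, hU2, hU3, hU4, hU5, hU6, hU7, hU8,
        hU9, hU10, F1, F2, F3, sigma_cancel, map_add, map_smul, smul_add, smul_smul,
        not_true, not_false_iff, iff_true, iff_false, if_true, if_false, hbrw]
      try module
      try rfl

end Braid


/-! ### The representation -/

variable (q N) in
noncomputable def ρ : HeckeAlgebra q (N + 1) →ₐ[ℂ] Module.End ℂ (M N) :=
  RingQuot.liftAlgHom ℂ (s := HeckeRel q (N + 1))
    ⟨FreeAlgebra.lift ℂ (fun i => (T q N i : Module.End ℂ (M N))), by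
      intro x y hxy
      induction hxy with
      | comm i j h =>
        simp only [map_mul, FreeAlgebra.lift_ι_apply]
        exact T_comm h
      | braid i j h =>
        simp only [map_mul, FreeAlgebra.lift_ι_apply]
        rcases h with h | h
        · exact T_braid h
        · exact (T_braid h).symm
      | quad i =>
        simp only [map_mul, map_sub, map_add, map_one, map_zero, AlgHom.commutes,
          FreeAlgebra.lift_ι_apply]
        have hal : (algebraMap ℂ (Module.End ℂ (M N))) q = q • 1 := by
          rw [Algebra.algebraMap_eq_smul_one]
        rw [hal]
        exact T_quad' (q := q) (N := N) i⟩

lemma ρ_t (i : Fin N) : ρ q N (t q N i) = T q N i := by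
  rw [ρ, t, RingQuot.liftAlgHom_mkAlgHom_apply, FreeAlgebra.lift_ι_apply]

variable (q N) in
noncomputable def ε : HeckeAlgebra q (N + 1) →ₗ[ℂ] M N where
  toFun x := ρ q N x (Finsupp.single 1 1)
  map_add' x y := by simp [map_add]
  map_smul' c x := by simp [map_smul]

lemma ε_surjective (hq : q ≠ 0) : Function.Surjective (ε q N) := by
  have hrange : ∀ w : W N, (Finsupp.single w 1 : M N) ∈ LinearMap.range (ε q N) := by
    intro w
    have hw : w ∈ Submonoid.closure (Set.range (σ N)) := by
      have : Set.range (σ N) =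
          Set.range fun i : Fin N => Equiv.swap i.castSucc i.succ := rfl
      rw [this, Equiv.Perm.mclosure_swap_castSucc_succ]; trivial
    induction hw using Submonoid.closure_induction_left with
    | one => exact ⟨1, by simp [ε, map_one, Module.End.one_apply]⟩
    | mul_left u hu x hx ih =>
      obtain ⟨i, rfl⟩ := hu
      obtain ⟨y, hy⟩ := ih
      have key : ∀ z : HeckeAlgebra q (N + 1), ε q N (t q N i * z) = T q N i (ε q N z) := by
        intro z
        simp [ε, map_mul, ρ_t, Module.End.mul_apply]
      by_cases hU : U N i x
      · refine ⟨t q N i * y, ?_⟩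
        rw [key, hy, Tsu hU]
      · refine ⟨q⁻¹ • (t q N i * y - (1 - q) • y), ?_⟩
        rw [map_smul, map_sub, map_smul, key, hy, Tsd hU]
        rw [add_sub_cancel_right, smul_smul, inv_mul_cancel₀ hq, one_smul]
  intro m
  induction m using Finsupp.induction_linear with
  | zero => exact ⟨0, map_zero _⟩
  | add f g hf hg =>
    obtain ⟨x, hx⟩ := hf; obtain ⟨y, hy⟩ := hg
    exact ⟨x + y, by rw [map_add, hx, hy]⟩
  | single w c =>
    obtain ⟨x, hx⟩ := hrange w
    refine ⟨c • x, ?_⟩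
    rw [map_smul, hx, Finsupp.smul_single, smul_eq_mul, mul_one]


/-! ### Spanning by normal-form monomials -/

variable (q N) in
noncomputable def t' (k : ℕ) : HeckeAlgebra q (N + 1) :=
  if h : k < N then t q N ⟨k, h⟩ else 1

lemma t'_comm {a b : ℕ} (h : a + 1 < b ∨ b + 1 < a) :
    t' q N a * t' q N b = t' q N b * t' q N a := by
  unfold t'
  split_ifs with h1 h2 h2
  any_goals first | exact t_comm h | rw [mul_one, one_mul] | rfl

lemma t'_braid {a b : ℕ} (h : a + 1 = b) (hb : b < N) :
    t' q N a * t' q N b * t' q N a = t' q N b * t' q N a * t' q N b := by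
  have ha : a < N := by omega
  unfold t'
  rw [dif_pos ha, dif_pos hb]
  exact t_braid (Or.inl h)

lemma t'_sq {a : ℕ} (ha : a < N) :
    t' q N a * t' q N a = (1 - q) • t' q N a + q • 1 := by
  unfold t'; rw [dif_pos ha]; exact t_sq _

variable (q N) in
noncomputable def D (k m : ℕ) : HeckeAlgebra q (N + 1) :=
  (((List.range m).map fun l => t' q N (k - l)).prod)

lemma D_zero (k : ℕ) : D q N k 0 = 1 := rfl

lemma D_succ (k m : ℕ) : D q N k (m + 1) = D q N k m * t' q N (k - m) := by
  rw [D, List.range_succ, List.map_append, List.prod_append, List.map_singleton,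
    List.prod_singleton, D]

lemma D_comm (k : ℕ) : ∀ {m i : ℕ}, i + m < k →
    D q N k m * t' q N i = t' q N i * D q N k m := by
  intro m
  induction m with
  | zero => intro i _; rw [D_zero, one_mul, mul_one]
  | succ m ih =>
    intro i hi
    have hcm : t' q N (k - m) * t' q N i = t' q N i * t' q N (k - m) :=
      t'_comm (Or.inr (by omega))
    rw [D_succ, mul_assoc, hcm, ← mul_assoc, ih (by omega), mul_assoc]

lemma D_slide (k : ℕ) (hk : k < N) : ∀ {m i : ℕ}, m ≤ k + 1 → k + 1 < i + m → i ≤ k →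
    D q N k m * t' q N i = t' q N (i - 1) * D q N k m := by
  intro m
  induction m with
  | zero => intro i _ h1 h2; omega
  | succ m ih =>
    intro i hm hi hik
    by_cases hc : k + 1 < i + m
    · -- t' i commutes with the last factor t' (k - m)
      have hcm : t' q N (k - m) * t' q N i = t' q N i * t' q N (k - m) :=
        t'_comm (Or.inl (by omega))
      rw [D_succ, mul_assoc, hcm, ← mul_assoc, ih (by omega) hc hik, mul_assoc]
    · -- i = k - m + 1; the braid case
      have him : i + m = k + 1 := by omega
      have hm1 : 1 ≤ m := by omega
      obtain ⟨m', rfl⟩ : ∃ m', m = m' + 1 := ⟨m - 1, by omega⟩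
      have hkm : k - (m' + 1) = i - 1 := by omega
      have hkm' : k - m' = i := by omega
      rw [D_succ, hkm, D_succ, hkm']
      -- goal : D k m' * t' i * t' (i-1) * t' i = t' (i-1) * (D k m' * t' i * t' (i-1))
      have hbr : t' q N (i - 1) * t' q N i * t' q N (i - 1)
          = t' q N i * t' q N (i - 1) * t' q N i := t'_braid (by omega) (by omega)
      have hcomm : D q N k m' * t' q N (i - 1) = t' q N (i - 1) * D q N k m' :=
        D_comm k (by omega)
      calc D q N k m' * t' q N i * t' q N (i - 1) * t' q N i
          = D q N k m' * (t' q N i * t' q N (i - 1) * t' q N i) := by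
            simp only [mul_assoc]
        _ = D q N k m' * (t' q N (i - 1) * t' q N i * t' q N (i - 1)) := by rw [← hbr]
        _ = (D q N k m' * t' q N (i - 1)) * (t' q N i * t' q N (i - 1)) := by
            simp only [mul_assoc]
        _ = (t' q N (i - 1) * D q N k m') * (t' q N i * t' q N (i - 1)) := by rw [hcomm]
        _ = t' q N (i - 1) * (D q N k m' * t' q N i * t' q N (i - 1)) := by
            simp only [mul_assoc]

variable (q N) in
noncomputable def Sp : ℕ → Submodule ℂ (HeckeAlgebra q (N + 1))
  | 0 => Submodule.span ℂ {1}
  | (K + 1) => ⨆ m : Fin (K + 2),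
      Submodule.map (LinearMap.mulRight ℂ (D q N K (m : ℕ))) (Sp K)

lemma mem_Sp_succ {K : ℕ} {z : HeckeAlgebra q (N + 1)} (m : ℕ) (hm : m < K + 2)
    (hz : z ∈ Sp q N K) : z * D q N K m ∈ Sp q N (K + 1) := by
  have : z * D q N K m ∈
      Submodule.map (LinearMap.mulRight ℂ (D q N K ((⟨m, hm⟩ : Fin (K + 2)) : ℕ)))
        (Sp q N K) := ⟨z, hz, rfl⟩
  exact Submodule.mem_iSup_of_mem ⟨m, hm⟩ this

lemma Sp_mono {K : ℕ} : Sp q N K ≤ Sp q N (K + 1) := by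
  intro x hx
  have := mem_Sp_succ (q := q) (N := N) 0 (by omega) hx
  rwa [D_zero, mul_one] at this

lemma one_mem_Sp (K : ℕ) : (1 : HeckeAlgebra q (N + 1)) ∈ Sp q N K := by
  induction K with
  | zero => exact Submodule.subset_span rfl
  | succ K ih => exact Sp_mono ih

lemma Sp_stab : ∀ K, K ≤ N → ∀ a : ℕ, a < K →
    ∀ x ∈ Sp q N K, x * t' q N a ∈ Sp q N K := by
  intro K
  induction K with
  | zero => intro _ a ha; omega
  | succ K ih =>
    intro hKN a ha x hx
    refine Submodule.iSup_induction _ (motive := fun y => y * t' q N a ∈ Sp q N (K + 1)) hx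
      ?_ ?_ ?_
    · rintro ⟨mm, hmlt⟩ y ⟨z, hz, rfl⟩
      simp only [LinearMap.mulRight_apply]
      show z * D q N K mm * t' q N a ∈ Sp q N (K + 1)
      by_cases hm0 : mm = 0
      · -- y = z
        subst hm0
        rw [D_zero, mul_one]
        by_cases haK : a < K
        · exact Sp_mono (ih (by omega) a haK z hz)
        · -- a = K : z * t' K = z * D K 1
          have haK' : a = K := by omega
          have hD1 : D q N K 1 = t' q N a := by
            have : D q N K (0 + 1) = D q N K 0 * t' q N (K - 0) := D_succ K 0
            rw [D_zero, one_mul] at this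
            rw [this, Nat.sub_zero, haK']
          rw [← hD1]
          exact mem_Sp_succ 1 (by omega) hz
      · rcases Nat.lt_or_ge (a + mm) K with hc | hc
        · -- commute case
          rw [mul_assoc, D_comm K hc, ← mul_assoc]
          have hz' : z * t' q N a ∈ Sp q N K := ih (by omega) a (by omega) z hz
          exact mem_Sp_succ mm hmlt hz'
        · rcases Nat.lt_or_ge (a + mm) (K + 1) with hc2 | hc2
          · -- a + mm = K : extension case
            have hKm : K - mm = a := by omega
            rw [mul_assoc, show D q N K mm * t' q N a = D q N K (mm + 1) by
              rw [D_succ, hKm]]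
            exact mem_Sp_succ (mm + 1) (by omega) hz
          · rcases Nat.lt_or_ge (a + mm) (K + 2) with hc3 | hc3
            · -- a + mm = K + 1 : square case
              obtain ⟨m', rfl⟩ : ∃ m', mm = m' + 1 := ⟨mm - 1, by omega⟩
              have hKm' : K - m' = a := by omega
              have hsq : D q N K (m' + 1) * t' q N a
                  = (1 - q) • D q N K (m' + 1) + q • D q N K m' := by
                rw [D_succ, hKm', mul_assoc, t'_sq (by omega), mul_add, mul_smul_comm,
                  mul_smul_comm, mul_one]
              rw [mul_assoc, hsq, mul_add, mul_smul_comm, mul_smul_comm]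
              have h1 := mem_Sp_succ (q := q) (N := N) (m' + 1) hmlt hz
              have h2 := mem_Sp_succ (q := q) (N := N) m' (by omega) hz
              exact Submodule.add_mem _ (Submodule.smul_mem _ _ h1)
                (Submodule.smul_mem _ _ h2)
            · -- slide case
              have hsl : D q N K mm * t' q N a = t' q N (a - 1) * D q N K mm :=
                D_slide K (by omega) (by omega) (by omega) (by omega)
              rw [mul_assoc, hsl, ← mul_assoc]
              have hz' : z * t' q N (a - 1) ∈ Sp q N K := ih (by omega) (a - 1)
                (by omega) z hz
              exact mem_Sp_succ mm hmlt hz'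
    · show (0 : HeckeAlgebra q (N + 1)) * t' q N a ∈ Sp q N (K + 1)
      rw [zero_mul]; exact Submodule.zero_mem _
    · intro y1 y2 h1 h2
      rw [add_mul]
      exact Submodule.add_mem _ h1 h2


lemma t'_eq_t (i : Fin N) : t' q N (i : ℕ) = t q N i := by
  rw [t', dif_pos i.isLt]

lemma Sp_top : Sp q N N = ⊤ := by
  have hstab := Sp_stab (q := q) (N := N) N le_rfl
  let R : Subalgebra ℂ (HeckeAlgebra q (N + 1)) :=
    { carrier := {x | ∀ y ∈ Sp q N N, y * x ∈ Sp q N N}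
      mul_mem' := fun {a b} ha hb y hy => by
        rw [← mul_assoc]; exact hb _ (ha y hy)
      add_mem' := fun {a b} ha hb y hy => by
        rw [mul_add]; exact Submodule.add_mem _ (ha y hy) (hb y hy)
      one_mem' := fun y hy => by rwa [mul_one]
      zero_mem' := fun y hy => by rw [mul_zero]; exact Submodule.zero_mem _
      algebraMap_mem' := fun c y hy => by
        rw [← Algebra.commutes c y, ← Algebra.smul_def]
        exact Submodule.smul_mem _ _ hy }
  have hgen : Set.range (t q N) ⊆ (R : Set (HeckeAlgebra q (N + 1))) := by
    rintro _ ⟨i, rfl⟩ y hy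
    rw [← t'_eq_t]
    exact hstab (i : ℕ) i.isLt y hy
  have hadj : Algebra.adjoin ℂ (Set.range (t q N)) = ⊤ := by
    have hco : Set.range (t q N) = (RingQuot.mkAlgHom ℂ (HeckeRel q (N + 1))) ''
        Set.range (FreeAlgebra.ι ℂ) := by
      rw [← Set.range_comp]; rfl
    rw [hco, ← AlgHom.map_adjoin, FreeAlgebra.adjoin_range_ι, Algebra.map_top,
      AlgHom.range_eq_top]
    exact RingQuot.mkAlgHom_surjective ℂ _
  have hRtop : ∀ x : HeckeAlgebra q (N + 1), x ∈ R := by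
    intro x
    have : (⊤ : Subalgebra ℂ (HeckeAlgebra q (N + 1))) ≤ R := by
      rw [← hadj]; exact Algebra.adjoin_le hgen
    exact this trivial
  refine Submodule.eq_top_iff'.mpr fun x => ?_
  have := hRtop x 1 (one_mem_Sp N)
  rwa [one_mul] at this

lemma Sp_fg : ∀ K, ∃ s : Finset (HeckeAlgebra q (N + 1)),
    Sp q N K = Submodule.span ℂ (s : Set (HeckeAlgebra q (N + 1)))
      ∧ s.card ≤ Nat.factorial (K + 1) := by
  classical
  intro K
  induction K with
  | zero =>
    refine ⟨{1}, ?_, by simp [Nat.factorial]⟩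
    rw [Finset.coe_singleton]; rfl
  | succ K ih =>
    obtain ⟨s, hs, hc⟩ := ih
    refine ⟨Finset.biUnion Finset.univ
      (fun m : Fin (K + 2) => s.image (· * D q N K (m : ℕ))), ?_, ?_⟩
    · have : Sp q N (K + 1) = ⨆ m : Fin (K + 2),
          Submodule.map (LinearMap.mulRight ℂ (D q N K (m : ℕ))) (Sp q N K) := rfl
      rw [this]
      have hmap : ∀ m : Fin (K + 2),
          Submodule.map (LinearMap.mulRight ℂ (D q N K (m : ℕ))) (Sp q N K)
            = Submodule.span ℂ ((· * D q N K (m : ℕ)) '' (s : Set _)) := by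
        intro m
        rw [hs, Submodule.map_span]
        congr 1
      simp only [hmap]
      rw [← Submodule.span_iUnion]
      congr 1
      rw [Finset.coe_biUnion, Finset.coe_univ, Set.biUnion_univ]
      simp only [Finset.coe_image]
    · calc (Finset.biUnion Finset.univ
          (fun m : Fin (K + 2) => s.image (· * D q N K (m : ℕ)))).card
          ≤ ∑ m : Fin (K + 2), (s.image (· * D q N K (m : ℕ))).card :=
            Finset.card_biUnion_le
        _ ≤ ∑ _m : Fin (K + 2), s.card := by
            apply Finset.sum_le_sum; intro m _; exact Finset.card_image_le
        _ = (K + 2) * s.card := by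
            rw [Finset.sum_const, Finset.card_univ, Fintype.card_fin, smul_eq_mul]
        _ ≤ (K + 2) * Nat.factorial (K + 1) := by
            exact Nat.mul_le_mul_left _ hc
        _ = Nat.factorial (K + 2) := by
            rw [Nat.factorial_succ (K + 1)]

theorem aux (hq : q ≠ 0) :
    FiniteDimensional ℂ (HeckeAlgebra q (N + 1)) ∧
      Module.finrank ℂ (HeckeAlgebra q (N + 1)) = Nat.factorial (N + 1) := by
  obtain ⟨s, hs, hc⟩ := Sp_fg (q := q) (N := N) N
  have hspan : Submodule.span ℂ (s : Set (HeckeAlgebra q (N + 1))) = ⊤ := by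
    rw [← hs, Sp_top]
  have hfd : FiniteDimensional ℂ (HeckeAlgebra q (N + 1)) :=
    ⟨⟨s, hspan⟩⟩
  refine ⟨hfd, le_antisymm ?_ ?_⟩
  · have h1 : Module.finrank ℂ (HeckeAlgebra q (N + 1))
        = Module.finrank ℂ (Submodule.span ℂ (s : Set (HeckeAlgebra q (N + 1)))) := by
      rw [hspan, finrank_top]
    rw [h1]
    exact le_trans (finrank_span_finset_le_card s) hc
  · have hM : Module.finrank ℂ (M N) = Nat.factorial (N + 1) := by
      rw [Module.finrank_finsupp_self, Fintype.card_perm, Fintype.card_fin]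
    have hsur := ε_surjective (q := q) (N := N) hq
    have hrange : LinearMap.range (ε q N) = ⊤ := LinearMap.range_eq_top.mpr hsur
    have h2 : Module.finrank ℂ (M N)
        = Module.finrank ℂ (LinearMap.range (ε q N)) := by rw [hrange, finrank_top]
    rw [← hM, h2]
    exact LinearMap.finrank_range_le (ε q N)

end HeckeProof

/-- The Hecke algebra `H_n(q)` is a finite-dimensional `ℂ`-algebra of dimension `n!`. -/
theorem heckeAlgebra_finrank (q : ℂ) (hq : q ≠ 0) (n : ℕ) (hn : 1 ≤ n) :
    FiniteDimensional ℂ (HeckeAlgebra q n) ∧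
      Module.finrank ℂ (HeckeAlgebra q n) = Nat.factorial n := by
  obtain ⟨N, rfl⟩ : ∃ N, n = N + 1 := ⟨n - 1, by omega⟩
  exact HeckeProof.aux hq
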